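/- arXiv:2211.05205 — 5 statements merged into one kernel-verified Lean document; each statement's English description precedes it below -/
import Mathlib

section
/- Let P be a probability measure on Ω ⊆ ℝ^d with finite expected value E_P. Then E_P lies in the relative interior of the closed convex hull of the support of P. -/
/-!
Let `m` be the mean of `P` and `C` the closed convex hull of its support. If a continuous linear
functional `g` attains its minimum over `C` at `m`, then `g ≥ g m` on the support while
`∫ g dP = g m`, so `g = g m` almost everywhere, hence on the support by continuity, hence on all of
`C`. Thus no supporting hyperplane of `C` at `m` is proper, and for a convex set in finite
dimension this forces `m` into the relative interior: otherwise `m` could be separated from the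
(nonempty) interior of `C` taken inside its affine span.
-/

open MeasureTheory

/-- The (topological) support of a measure: points all of whose neighborhoods
have positive measure. -/
def measureSupport {d : ℕ} (P : Measure (EuclideanSpace ℝ (Fin d))) :
    Set (EuclideanSpace ℝ (Fin d)) :=
  {x | ∀ U ∈ nhds x, P U ≠ 0}

open Set

section Separation

variable {E : Type*} [AddCommGroup E] [Module ℝ E] [TopologicalSpace E] [IsTopologicalAddGroup E]
  [ContinuousSMul ℝ E]

theorem Convex.exists_forall_le_of_notMem_interior {D : Set E} {x : E} (hD : Convex ℝ D)
    (hDint : (interior D).Nonempty) (hx : x ∉ interior D) :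
    ∃ f : StrongDual ℝ E, (∀ a ∈ D, f x ≤ f a) ∧ ∀ a ∈ interior D, f x < f a := by
  obtain ⟨f, hf⟩ := geometric_hahn_banach_point_open hD.interior isOpen_interior hx
  refine ⟨f, fun a ha => ?_, hf⟩
  have hD_sub : D ⊆ closure (interior D) := by
    rw [hD.closure_interior_eq_closure_of_nonempty_interior hDint]
    exact subset_closure
  exact closure_minimal (fun b hb => (hf b hb).le) (isClosed_le continuous_const f.continuous)
    (hD_sub ha)

end Separation

theorem Convex.mem_intrinsicInterior_of_isMinOn_imp_const {E : Type*} [NormedAddCommGroup E]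
    [NormedSpace ℝ E] [FiniteDimensional ℝ E] {C : Set E} {m : E} (hC : Convex ℝ C) (hm : m ∈ C)
    (h : ∀ g : StrongDual ℝ E, IsMinOn g C m → C ⊆ g ⁻¹' {g m}) :
    m ∈ intrinsicInterior ℝ C := by
  set A := affineSpan ℝ C
  have : Nonempty C := ⟨⟨m, hm⟩⟩
  let p : A := ⟨m, subset_affineSpan ℝ C hm⟩
  let φ := AffineIsometryEquiv.vaddConst ℝ p
  -- `C - m` seen inside the direction of `affineSpan ℝ C`, where it has nonempty interior
  let D : Set A.direction := φ ⁻¹' ((↑) ⁻¹' C)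
  have hD : Convex ℝ D := hC.affine_preimage (A.subtype.comp φ.toAffineEquiv.toAffineMap)
  have hDint : (interior D).Nonempty := by
    rw [hD.interior_nonempty_iff_affineSpan_eq_top]
    change affineSpan ℝ (φ.toAffineEquiv ⁻¹' ((↑) ⁻¹' C)) = ⊤
    rw [← AffineSubspace.comap_span, affineSpan_coe_preimage_eq_top, AffineSubspace.comap_top]
  suffices h0 : (0 : A.direction) ∈ interior D by
    refine ⟨p, ?_, rfl⟩
    change 0 ∈ interior (φ.toHomeomorph ⁻¹' ((↑) ⁻¹' C)) at h0
    rw [← φ.toHomeomorph.preimage_interior] at h0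
    simpa [φ] using h0
  by_contra h0
  obtain ⟨f, hfD, hf_int⟩ := hD.exists_forall_le_of_notMem_interior hDint h0
  obtain ⟨g, hg, -⟩ := exists_extension_norm_eq A.direction f
  have hgf : ∀ v : A.direction, g ((v : E) + m) = f v + g m := by
    intro v; rw [map_add, hg]
  have hDC : ∀ v : A.direction, v ∈ D ↔ (v : E) + m ∈ C := fun v => Iff.rfl
  have hmin : IsMinOn g C m := by
    intro x hx
    let v : A.direction :=
      ⟨x - m, AffineSubspace.vsub_mem_direction (subset_affineSpan ℝ C hx) p.2⟩
    have hvD : v ∈ D := (hDC v).2 (by simpa [v] using hx)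
    calc g m = f 0 + g m := by rw [map_zero, zero_add]
      _ ≤ f v + g m := by gcongr; exact hfD v hvD
      _ = g x := by rw [← hgf, sub_add_cancel]
  obtain ⟨z, hz⟩ := hDint
  have hz_const : g ((z : E) + m) = g m := h g hmin ((hDC z).1 (interior_subset hz))
  have hz_pos : f 0 < f z := hf_int z hz
  rw [hgf] at hz_const
  rw [map_zero] at hz_pos
  linarith

theorem measureSupport_eq_support {d : ℕ} (P : Measure (EuclideanSpace ℝ (Fin d))) :
    measureSupport P = P.support := by
  ext x
  simp [measureSupport, Measure.mem_support_iff_forall, pos_iff_ne_zero]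

namespace MeasureTheory.Measure

variable {X : Type*} [TopologicalSpace X] [MeasurableSpace X] {μ : Measure X}

theorem eqOn_support_of_ae_eq {Y : Type*} [TopologicalSpace Y] [T2Space Y] {f g : X → Y}
    (hf : Continuous f) (hg : Continuous g) (hfg : f =ᵐ[μ] g) : EqOn f g μ.support := by
  intro x hx
  by_contra hne
  exact ((mem_support_iff_forall x).1 hx _ ((isOpen_ne_fun hf hg).mem_nhds hne)).ne'
    (ae_iff.1 hfg)

theorem eqOn_support_of_integral_le [HereditarilyLindelofSpace X] [IsProbabilityMeasure μ]
    {f : X → ℝ} (hf : Continuous f) (hfi : Integrable f μ)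
    (h : ∀ x ∈ μ.support, ∫ y, f y ∂μ ≤ f x) : EqOn f (fun _ => ∫ y, f y ∂μ) μ.support := by
  have hae : (fun _ => ∫ y, f y ∂μ) ≤ᵐ[μ] f := Filter.mem_of_superset support_mem_ae h
  have hconst : (fun _ => ∫ y, f y ∂μ) =ᵐ[μ] f :=
    (integral_eq_iff_of_ae_le (integrable_const _) hfi hae).1 (by simp)
  exact (eqOn_support_of_ae_eq continuous_const hf hconst).symm

end MeasureTheory.Measure

/-- The expected value of a probability measure `P` on (a subset of) `ℝ^d`
with finite expectation lies in the relative interior of the closed convex hull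
of the support of `P`. -/
theorem expectation_mem_intrinsicInterior_convexSupport
    {d : ℕ} (P : Measure (EuclideanSpace ℝ (Fin d)))
    [IsProbabilityMeasure P]
    (hint : Integrable (fun x => x) P) :
    (∫ x, x ∂P) ∈
      intrinsicInterior ℝ (closure (convexHull ℝ (measureSupport P))) := by
  rw [measureSupport_eq_support]
  set m := ∫ x, x ∂P
  have hC : Convex ℝ (closure (convexHull ℝ P.support)) := (convex_convexHull ℝ _).closure
  have hSC : P.support ⊆ closure (convexHull ℝ P.support) :=
    (subset_convexHull ℝ _).trans subset_closure
  have hm : m ∈ closure (convexHull ℝ P.support) :=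
    hC.integral_mem isClosed_closure (Filter.mem_of_superset Measure.support_mem_ae hSC) hint
  refine hC.mem_intrinsicInterior_of_isMinOn_imp_const hm fun g hg => ?_
  have hgm : ∫ x, g x ∂P = g m := g.integral_comp_comm hint
  have hgS : EqOn g (fun _ => g m) P.support := by
    simpa only [hgm] using Measure.eqOn_support_of_integral_le g.continuous
      (g.integrable_comp hint) (fun x hx => hgm ▸ hg (hSC hx))
  have hlevel : Convex ℝ (g ⁻¹' {g m}) := (convex_singleton _).linear_preimage g.toLinearMap
  exact closure_minimal (convexHull_min (fun x hx => hgS hx) hlevel)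
    (isClosed_singleton.preimage g.continuous)
end

section
/- Let S ⊆ ℝ^d be nonempty and convex and let x ∈ S. Then x belongs to the relative interior of S if and only if for every direction v ∈ ℝ^d with -σ_S(-v) ≠ σ_S(v), one has ⟨v, x⟩ < σ_S(v), where σ_S(v) := sup_{y∈S} ⟨v,y⟩ is the support function of S. -/
/-! A non-constant linear functional cannot be maximal on `S` at a relative interior point `x`:
moving from `x` away from a point where it is smaller stays in `S` and increases it. Conversely,
if `x ∈ S` is not in the relative interior, then after translating the affine span of `S` onto its
direction, `x` becomes a point outside the interior of a convex body, and Hahn–Banach separation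
gives a functional maximal at `x` that is non-constant on `S`. Through the support function,
`-σ_S(-v) ≠ σ_S(v)` says exactly that `⟪v, ·⟫` is non-constant on `S`. -/

open scoped RealInnerProductSpace

/-- The support function of a set, with values in the extended reals. -/
noncomputable def suppFn {d : ℕ} (S : Set (EuclideanSpace ℝ (Fin d)))
    (v : EuclideanSpace ℝ (Fin d)) : EReal :=
  ⨆ y ∈ S, ((⟪v, y⟫ : ℝ) : EReal)

open Topology

section TopologicalVectorSpace

variable {E : Type*} [AddCommGroup E] [Module ℝ E] [TopologicalSpace E]
  [IsTopologicalAddGroup E] [ContinuousSMul ℝ E] {s : Set E} {x y : E}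

theorem exists_add_smul_sub_mem_of_mem_intrinsicInterior (hx : x ∈ intrinsicInterior ℝ s)
    (hy : y ∈ s) : ∃ t : ℝ, 0 < t ∧ x + t • (x - y) ∈ s := by
  obtain ⟨x', hx', rfl⟩ := mem_intrinsicInterior.1 hx
  have hmem (t : ℝ) : (x' : E) + t • ((x' : E) - y) ∈ affineSpan ℝ s := by
    convert AffineMap.lineMap_mem (-t) x'.2 (subset_affineSpan ℝ s hy) using 1
    rw [AffineMap.lineMap_apply]
    simp only [vsub_eq_sub, vadd_eq_add, neg_smul, ← smul_neg, neg_sub]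
    abel
  let c : ℝ → affineSpan ℝ s := fun t ↦ ⟨_, hmem t⟩
  have hc : Continuous c := by fun_prop
  have hc0 : c 0 = x' := by ext; simp [c]
  have hev : ∀ᶠ t in 𝓝[>] 0, c t ∈ interior ((↑) ⁻¹' s : Set (affineSpan ℝ s)) :=
    nhdsWithin_le_nhds (hc.tendsto 0 (hc0 ▸ isOpen_interior.mem_nhds hx'))
  obtain ⟨t, ht, htpos⟩ := (hev.and self_mem_nhdsWithin).exists
  exact ⟨t, htpos, (interior_subset ht : c t ∈ _)⟩

theorem exists_lt_of_mem_intrinsicInterior (f : E →ₗ[ℝ] ℝ) (hx : x ∈ intrinsicInterior ℝ s)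
    {z : E} (hy : y ∈ s) (hz : z ∈ s) (hyz : f y < f z) : ∃ w ∈ s, f x < f w := by
  rcases lt_or_ge (f x) (f z) with hxz | hzx
  · exact ⟨z, hz, hxz⟩
  obtain ⟨t, ht, hmem⟩ := exists_add_smul_sub_mem_of_mem_intrinsicInterior hx hy
  refine ⟨_, hmem, ?_⟩
  simp only [map_add, map_smul, map_sub, smul_eq_mul]
  nlinarith

theorem Convex.exists_le_lt_of_notMem_interior (hs : Convex ℝ s) (hint : (interior s).Nonempty)
    (hx : x ∉ interior s) : ∃ f : StrongDual ℝ E, (∀ y ∈ s, f y ≤ f x) ∧ ∃ y ∈ s, f y < f x := by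
  obtain ⟨f, hf⟩ := geometric_hahn_banach_open_point hs.interior isOpen_interior hx
  obtain ⟨y, hy⟩ := hint
  refine ⟨f, fun z hz ↦ ?_, y, interior_subset hy, hf y hy⟩
  -- `f < f x` on the interior passes to `s ⊆ closure (interior s)`
  have hz' : z ∈ closure (interior s) := by
    rw [hs.closure_interior_eq_closure_of_nonempty_interior ⟨y, hy⟩]
    exact subset_closure hz
  exact closure_minimal (fun w hw ↦ (hf w hw).le) (isClosed_le f.continuous continuous_const) hz'

end TopologicalVectorSpace

theorem Convex.exists_le_lt_of_notMem_intrinsicInterior {V : Type*} [NormedAddCommGroup V]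
    [NormedSpace ℝ V] [FiniteDimensional ℝ V] {s : Set V} {x : V} (hs : Convex ℝ s) (hx : x ∈ s)
    (hxs : x ∉ intrinsicInterior ℝ s) :
    ∃ f : StrongDual ℝ V, (∀ y ∈ s, f y ≤ f x) ∧ ∃ y ∈ s, f y < f x := by
  set A := affineSpan ℝ s
  let x' : A := ⟨x, subset_affineSpan ℝ s hx⟩
  have : Nonempty A := ⟨x'⟩
  let e := (AffineIsometryEquiv.vaddConst ℝ x').toHomeomorph
  have he (w : A.direction) : (e w : V) = w + x := rfl
  let t : Set A.direction := e ⁻¹' ((↑) ⁻¹' s)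
  have ht : Convex ℝ t := hs.affine_preimage
    (A.subtype.comp (AffineIsometryEquiv.vaddConst ℝ x').toAffineEquiv.toAffineMap)
  have hint : (interior t).Nonempty := by
    obtain ⟨_, q, hq, rfl⟩ := Set.Nonempty.intrinsicInterior hs ⟨x, hx⟩
    exact ⟨e.symm q, by rwa [← e.preimage_interior, Set.mem_preimage, e.apply_symm_apply]⟩
  have h0 : (0 : A.direction) ∉ interior t := by
    rw [← e.preimage_interior]
    intro h
    exact hxs ⟨e 0, h, by simp [he]⟩
  obtain ⟨f, hle, y, hy, hlt⟩ := ht.exists_le_lt_of_notMem_interior hint h0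
  obtain ⟨g, hg, -⟩ := exists_extension_norm_eq A.direction f
  have hgf (w : A.direction) : g (e w) - g x = f w := by rw [he, map_add, add_sub_cancel_right, hg]
  refine ⟨g, fun z hz ↦ ?_, e y, hy, by linarith [hgf y, map_zero f]⟩
  let w : A.direction := ⟨z - x, A.vsub_mem_direction (subset_affineSpan ℝ s hz) x'.2⟩
  have hw : e w = z := by rw [he]; exact sub_add_cancel z x
  have := hle w (show (e w : V) ∈ s by rwa [hw])
  linarith [hgf w, map_zero f, congrArg g hw]

section SuppFn

variable {d : ℕ} {S : Set (EuclideanSpace ℝ (Fin d))} {v : EuclideanSpace ℝ (Fin d)}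

theorem suppFn_le_iff {c : EReal} : suppFn S v ≤ c ↔ ∀ y ∈ S, ((⟪v, y⟫ : ℝ) : EReal) ≤ c :=
  iSup₂_le_iff

theorem le_suppFn {y : EuclideanSpace ℝ (Fin d)} (hy : y ∈ S) :
    ((⟪v, y⟫ : ℝ) : EReal) ≤ suppFn S v :=
  suppFn_le_iff.1 le_rfl y hy

theorem neg_suppFn_neg_le {y : EuclideanSpace ℝ (Fin d)} (hy : y ∈ S) :
    -suppFn S (-v) ≤ ((⟪v, y⟫ : ℝ) : EReal) := by
  rw [EReal.neg_le, ← EReal.coe_neg, ← inner_neg_left]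
  exact le_suppFn hy

theorem neg_suppFn_neg_ne_suppFn_iff (hS : S.Nonempty) :
    -suppFn S (-v) ≠ suppFn S v ↔ ∃ y ∈ S, ∃ z ∈ S, ⟪v, y⟫ < ⟪v, z⟫ := by
  refine ⟨fun h ↦ ?_, fun ⟨y, hy, z, hz, hyz⟩ ↦ ?_⟩
  · by_contra! hconst
    obtain ⟨y₀, hy₀⟩ := hS
    have hv : suppFn S v ≤ ((⟪v, y₀⟫ : ℝ) : EReal) :=
      suppFn_le_iff.2 fun y hy ↦ EReal.coe_le_coe_iff.2 (hconst y₀ hy₀ y hy)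
    have hnegv : suppFn S (-v) ≤ ((-⟪v, y₀⟫ : ℝ) : EReal) :=
      suppFn_le_iff.2 fun y hy ↦ by
        rw [inner_neg_left]
        exact EReal.coe_le_coe_iff.2 (neg_le_neg (hconst y hy y₀ hy₀))
    refine h (le_antisymm ((neg_suppFn_neg_le hy₀).trans (le_suppFn hy₀)) (hv.trans ?_))
    rwa [EReal.le_neg, ← EReal.coe_neg]
  · exact ((neg_suppFn_neg_le hy).trans_lt (EReal.coe_lt_coe_iff.2 hyz)).trans_le (le_suppFn hz) |>.ne

end SuppFn

theorem mem_intrinsicInterior_iff_support_function_general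
    {d : ℕ} (S : Set (EuclideanSpace ℝ (Fin d)))
    (hconv : Convex ℝ S)
    (x : EuclideanSpace ℝ (Fin d)) (hx : x ∈ S) :
    x ∈ intrinsicInterior ℝ S ↔
      ∀ v : EuclideanSpace ℝ (Fin d),
        -suppFn S (-v) ≠ suppFn S v → ((⟪v, x⟫ : ℝ) : EReal) < suppFn S v := by
  refine ⟨fun hxS v hv ↦ ?_, fun h ↦ ?_⟩
  · obtain ⟨y, hy, z, hz, hyz⟩ := (neg_suppFn_neg_ne_suppFn_iff ⟨x, hx⟩).1 hv
    obtain ⟨w, hw, hxw⟩ := exists_lt_of_mem_intrinsicInterior (innerₛₗ ℝ v) hxS hy hz hyz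
    exact (EReal.coe_lt_coe_iff.2 hxw).trans_le (le_suppFn hw)
  · by_contra hxS
    obtain ⟨f, hle, y, hy, hlt⟩ := hconv.exists_le_lt_of_notMem_intrinsicInterior hx hxS
    set v := (InnerProductSpace.toDual ℝ _).symm f
    have hvf (z : EuclideanSpace ℝ (Fin d)) : ⟪v, z⟫ = f z := InnerProductSpace.toDual_symm_apply
    have hv : -suppFn S (-v) ≠ suppFn S v :=
      (neg_suppFn_neg_ne_suppFn_iff ⟨x, hx⟩).2 ⟨y, hy, x, hx, by rwa [hvf, hvf]⟩
    refine (h v hv).not_ge (suppFn_le_iff.2 fun z hz ↦ ?_)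
    exact EReal.coe_le_coe_iff.2 (by rw [hvf, hvf]; exact hle z hz)

/-- A point `x` of a nonempty convex set `S ⊆ ℝ^d` lies in the relative
interior of `S` iff for every direction `v` with `-σ_S(-v) ≠ σ_S(v)` one has
`⟨v, x⟩ < σ_S(v)`. -/
theorem mem_intrinsicInterior_iff_support_function
    {d : ℕ} (S : Set (EuclideanSpace ℝ (Fin d)))
    (hS : S.Nonempty) (hconv : Convex ℝ S)
    (x : EuclideanSpace ℝ (Fin d)) (hx : x ∈ S) :
    x ∈ intrinsicInterior ℝ S ↔
      ∀ v : EuclideanSpace ℝ (Fin d),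
        -suppFn S (-v) ≠ suppFn S v → ((⟪v, x⟫ : ℝ) : EReal) < suppFn S v :=
  mem_intrinsicInterior_iff_support_function_general S hconv x hx
end

section
/- Let φ: ℝ^d → (-∞, +∞] be a closed function of Legendre type and let ϕ: ℝ^d → (-∞, +∞] be proper, closed and convex with int(dom φ) ∩ dom ϕ ≠ ∅. Assume one of φ, ϕ is coercive (its sublevel sets are bounded) and the other is bounded below. Then the problem min{ φ(y) + ϕ(y) : y ∈ ℝ^d } has a unique solution y*, and moreover y* ∈ int(dom φ) ∩ dom ϕ. -/
open scoped RealInnerProductSpace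
open Filter Topology

variable {d : ℕ}

/-- Effective domain of an extended-real-valued function. -/
def edom (φ : EuclideanSpace ℝ (Fin d) → EReal) : Set (EuclideanSpace ℝ (Fin d)) :=
  {x | φ x ≠ ⊤}

/-- The finite (real-valued) representative of `φ`. -/
noncomputable def fin (φ : EuclideanSpace ℝ (Fin d) → EReal) :
    EuclideanSpace ℝ (Fin d) → ℝ := fun x => (φ x).toReal

/-- Properness: never `⊥` and not identically `⊤`. -/
def IsProperFn (φ : EuclideanSpace ℝ (Fin d) → EReal) : Prop :=
  (∀ x, φ x ≠ ⊥) ∧ (edom φ).Nonempty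

/-- Convexity of an extended-real-valued (nowhere `⊥`) function. -/
def IsConvexFn (φ : EuclideanSpace ℝ (Fin d) → EReal) : Prop :=
  ∀ x y : EuclideanSpace ℝ (Fin d), ∀ a b : ℝ, 0 ≤ a → 0 ≤ b → a + b = 1 →
    φ (a • x + b • y) ≤ (a : EReal) * φ x + (b : EReal) * φ y

/-- Essential smoothness: the interior of the domain is nonempty, the function is
differentiable there, and gradients blow up along sequences converging to a
boundary point of the domain (steepness). -/
def EssentiallySmooth (φ : EuclideanSpace ℝ (Fin d) → EReal) : Prop :=
  (interior (edom φ)).Nonempty ∧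
  (∀ x ∈ interior (edom φ), DifferentiableAt ℝ (fin φ) x) ∧
  (∀ (x : ℕ → EuclideanSpace ℝ (Fin d)) (x' : EuclideanSpace ℝ (Fin d)),
    (∀ k, x k ∈ interior (edom φ)) → Tendsto x atTop (𝓝 x') →
      x' ∈ frontier (edom φ) →
        Tendsto (fun k => ‖gradient (fin φ) (x k)‖) atTop atTop)

/-- A function of Legendre type: essentially smooth and strictly convex on the
interior of its domain. -/
def LegendreType (φ : EuclideanSpace ℝ (Fin d) → EReal) : Prop :=
  EssentiallySmooth φ ∧ StrictConvexOn ℝ (interior (edom φ)) (fin φ)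

/-- Closedness: lower semicontinuity. -/
def IsClosedFn (φ : EuclideanSpace ℝ (Fin d) → EReal) : Prop :=
  LowerSemicontinuous φ

/-- Coercivity for extended-real-valued functions. -/
def CoerciveFn (φ : EuclideanSpace ℝ (Fin d) → EReal) : Prop :=
  ∀ M : ℝ, ∃ R : ℝ, ∀ x, R ≤ ‖x‖ → (M : EReal) ≤ φ x

/-- Boundedness from below. -/
def BddBelowFn (φ : EuclideanSpace ℝ (Fin d) → EReal) : Prop :=
  ∃ m : ℝ, ∀ x, (m : EReal) ≤ φ x

/-!
A minimizer exists because `φ + ϕ` is lower semicontinuous and coercive, and it is unique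
because `φ` is strictly convex on `int (dom φ)`, once every minimizer is known to lie there.

For that, let `y ∈ dom φ ∩ dom ϕ` be a minimizer, pick `x ∈ int (dom φ) ∩ dom ϕ`, and put
`w = y + τ (x - y)` with `τ ∈ (0, 1]`. Minimality and convexity of `ϕ` give
`φ y - φ w ≤ τ (ϕ x - ϕ y)`; combined with the gradient inequality at `w` towards `y` this bounds
`⟪∇φ w, x - y⟫` from below. Testing the gradient inequality at `w` against a ball around `x` on
which `φ` is bounded then bounds `‖∇φ w‖` uniformly in `τ`, so by steepness `y` cannot lie on
the boundary of `dom φ`.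
-/

open Set

theorem ConvexOn.add_fderiv_le {F : Type*} [NormedAddCommGroup F] [NormedSpace ℝ F]
    {s : Set F} {f : F → ℝ} {f' : F →L[ℝ] ℝ} {x y : F} (hf : ConvexOn ℝ s f)
    (hx : x ∈ s) (hy : y ∈ s) (hf' : HasFDerivAt f f' x) :
    f x + f' (y - x) ≤ f y := by
  let l : ℝ →ᵃ[ℝ] F := AffineMap.lineMap x y
  have hl : MapsTo l (Icc 0 1) s := by
    simpa only [l, mapsTo_iff_image_subset, ← segment_eq_image_lineMap]
      using hf.1.segment_subset hx hy
  have hconv : ConvexOn ℝ (Icc 0 1) (f ∘ l) := (hf.comp_affineMap l).subset hl (convex_Icc 0 1)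
  have hl0 : l 0 = x := AffineMap.lineMap_apply_zero x y
  have hl1 : l 1 = y := AffineMap.lineMap_apply_one x y
  have hderiv : HasDerivAt (f ∘ l) (f' (y - x)) 0 :=
    (hl0 ▸ hf').comp_hasDerivAt (0 : ℝ) AffineMap.hasDerivAt_lineMap
  have := hconv.le_slope_of_hasDerivAt (by simp) (by simp) zero_lt_one hderiv
  rw [slope_def_field, Function.comp_apply, Function.comp_apply, hl0, hl1, sub_zero,
    div_one] at this
  linarith

section ConvexGradient

variable {E : Type*} [NormedAddCommGroup E] [InnerProductSpace ℝ E] [CompleteSpace E]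
  {s t : Set E} {f g : E → ℝ} {x y w x₀ : E}

theorem ConvexOn.add_inner_gradient_le (hf : ConvexOn ℝ s f) (hx : x ∈ s) (hy : y ∈ s)
    (hd : DifferentiableAt ℝ f x) : f x + ⟪gradient f x, y - x⟫ ≤ f y := by
  simpa using hf.add_fderiv_le hx hy (hasGradientAt_iff_hasFDerivAt.mp hd.hasGradientAt)

theorem ConvexOn.mul_norm_gradient_le {r M : ℝ} (hf : ConvexOn ℝ s f) (hw : w ∈ s)
    (hd : DifferentiableAt ℝ f w) (hr : 0 ≤ r) (hball : Metric.closedBall x₀ r ⊆ s)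
    (hM : ∀ z ∈ Metric.closedBall x₀ r, f z ≤ M) :
    r * ‖gradient f w‖ ≤ M - f w - ⟪gradient f w, x₀ - w⟫ := by
  set G := gradient f w
  -- the point of the ball furthest along `G`; it is `x₀` when `G = 0`, since `r / 0 = 0`
  set z := x₀ + (r / ‖G‖) • G
  have hz : z ∈ Metric.closedBall x₀ r := by
    rcases eq_or_ne G 0 with hG | hG
    · simp [z, hG, hr]
    · simp [z, dist_eq_norm, norm_smul, abs_of_nonneg hr, hG]
  have hinner : ⟪G, z - w⟫ = ⟪G, x₀ - w⟫ + r * ‖G‖ := by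
    rcases eq_or_ne G 0 with hG | hG
    · simp [hG]
    · have : z - w = (x₀ - w) + (r / ‖G‖) • G := by simp only [z]; abel
      rw [this, inner_add_right, real_inner_smul_right, real_inner_self_eq_norm_sq]
      field_simp
  have := hf.add_inner_gradient_le hw (hball hz) hd
  linarith [hM z hz]

theorem ConvexOn.mul_norm_gradient_le_of_isMinOn_add {r M τ : ℝ} (hf : ConvexOn ℝ s f)
    (hg : ConvexOn ℝ t g) (hmin : IsMinOn (f + g) (s ∩ t) y) (hy : y ∈ s ∩ t) (hx₀ : x₀ ∈ t)
    (hr : 0 ≤ r) (hball : Metric.closedBall x₀ r ⊆ s)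
    (hM : ∀ z ∈ Metric.closedBall x₀ r, f z ≤ M) (hτ : τ ∈ Ioc (0 : ℝ) 1)
    (hd : DifferentiableAt ℝ f (y + τ • (x₀ - y))) :
    r * ‖gradient f (y + τ • (x₀ - y))‖ ≤ M - f y + (g x₀ - g y) := by
  set w := y + τ • (x₀ - y)
  set G := gradient f w
  set D := ⟪G, x₀ - y⟫
  have hx₀s : x₀ ∈ s := hball (Metric.mem_closedBall_self hr)
  have hτ' : τ ∈ Icc (0 : ℝ) 1 := Ioc_subset_Icc_self hτ
  have hws : w ∈ s := hf.1.add_smul_sub_mem hy.1 hx₀s hτ'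
  have hwt : w ∈ t := hg.1.add_smul_sub_mem hy.2 hx₀ hτ'
  have hw_combo : w = (1 - τ) • y + τ • x₀ := by simp only [w]; module
  have hg_w : g w ≤ (1 - τ) * g y + τ * g x₀ := by
    rw [hw_combo]; exact hg.2 hy.2 hx₀ (by linarith [hτ.2]) hτ.1.le (by ring)
  have hmin_w : f y + g y ≤ f w + g w := hmin ⟨hws, hwt⟩
  have hgrad_y : f w + ⟪G, y - w⟫ ≤ f y := hf.add_inner_gradient_le hws hy.1 hd
  have hball_w := hf.mul_norm_gradient_le hws hd hr hball hM
  have hyw : y - w = (-τ) • (x₀ - y) := by simp only [w]; module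
  have hx₀w : x₀ - w = (1 - τ) • (x₀ - y) := by simp only [w]; module
  rw [hyw, real_inner_smul_right] at hgrad_y
  rw [hx₀w, real_inner_smul_right] at hball_w
  have hD : -D ≤ g x₀ - g y := by nlinarith [hτ.1]
  nlinarith [hτ.2]

end ConvexGradient

section ExtendedValued

variable {φ ϕ : EuclideanSpace ℝ (Fin d) → EReal} {x y : EuclideanSpace ℝ (Fin d)}

theorem coe_fin (hbot : φ x ≠ ⊥) (hx : x ∈ edom φ) : (fin φ x : EReal) = φ x :=
  EReal.coe_toReal hx hbot

theorem coe_fin_add_fin (hφ : ∀ x, φ x ≠ ⊥) (hϕ : ∀ x, ϕ x ≠ ⊥) (hx : x ∈ edom φ ∩ edom ϕ) :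
    ((fin φ x + fin ϕ x : ℝ) : EReal) = φ x + ϕ x := by
  rw [EReal.coe_add, coe_fin (hφ x) hx.1, coe_fin (hϕ x) hx.2]

theorem mem_edom_inter_of_add_ne_top (hφ : φ x ≠ ⊥) (hϕ : ϕ x ≠ ⊥) (h : φ x + ϕ x ≠ ⊤) :
    x ∈ edom φ ∩ edom ϕ :=
  (EReal.add_ne_top_iff_ne_top₂ hφ hϕ).mp h

theorem IsConvexFn.le_coe_combo (hφ : IsConvexFn φ) (hbot : ∀ x, φ x ≠ ⊥) (hx : x ∈ edom φ)
    (hy : y ∈ edom φ) {a b : ℝ} (ha : 0 ≤ a) (hb : 0 ≤ b) (hab : a + b = 1) :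
    φ (a • x + b • y) ≤ ((a * fin φ x + b * fin φ y : ℝ) : EReal) := by
  simpa only [EReal.coe_add, EReal.coe_mul, coe_fin (hbot _) hx, coe_fin (hbot _) hy]
    using hφ x y a b ha hb hab

theorem IsConvexFn.convexOn_fin (hφ : IsConvexFn φ) (hbot : ∀ x, φ x ≠ ⊥) :
    ConvexOn ℝ (edom φ) (fin φ) := by
  refine ⟨fun x hx y hy a b ha hb hab => ?_, fun x hx y hy a b ha hb hab => ?_⟩
  · exact ne_top_of_le_ne_top (EReal.coe_ne_top _) (hφ.le_coe_combo hbot hx hy ha hb hab)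
  · have := EReal.toReal_le_toReal (hφ.le_coe_combo hbot hx hy ha hb hab) (hbot _)
      (EReal.coe_ne_top _)
    rwa [EReal.toReal_coe] at this

theorem isMinOn_fin_add (hφ : ∀ x, φ x ≠ ⊥) (hϕ : ∀ x, ϕ x ≠ ⊥)
    (hmin : ∀ z, φ y + ϕ y ≤ φ z + ϕ z) (hy : y ∈ edom φ ∩ edom ϕ) :
    IsMinOn (fin φ + fin ϕ) (edom φ ∩ edom ϕ) y := fun z hz => by
  have := hmin z
  rw [← coe_fin_add_fin hφ hϕ hy, ← coe_fin_add_fin hφ hϕ hz] at this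
  exact_mod_cast this

theorem LowerSemicontinuous.add_of_ne_bot (hφ : LowerSemicontinuous φ)
    (hϕ : LowerSemicontinuous ϕ) (hφ_bot : ∀ x, φ x ≠ ⊥) (hϕ_bot : ∀ x, ϕ x ≠ ⊥) :
    LowerSemicontinuous (φ + ϕ) :=
  hφ.add' hϕ fun x => EReal.continuousAt_add (Or.inr (hϕ_bot x)) (Or.inl (hφ_bot x))

theorem CoerciveFn.add_bddBelowFn (hφ : CoerciveFn φ) (hϕ : BddBelowFn ϕ) :
    CoerciveFn (φ + ϕ) := by
  intro M
  obtain ⟨m, hm⟩ := hϕ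
  obtain ⟨R, hR⟩ := hφ (M - m)
  refine ⟨R, fun x hx => ?_⟩
  calc (M : EReal) = ((M - m : ℝ) : EReal) + m := by rw [← EReal.coe_add, sub_add_cancel]
    _ ≤ φ x + ϕ x := add_le_add (hR x hx) (hm x)

theorem BddBelowFn.add_coerciveFn (hφ : BddBelowFn φ) (hϕ : CoerciveFn ϕ) :
    CoerciveFn (φ + ϕ) := by
  rw [add_comm]; exact hϕ.add_bddBelowFn hφ

theorem CoerciveFn.exists_forall_le (hc : CoerciveFn φ) (hφ : LowerSemicontinuous φ)
    (hx : x ∈ edom φ) : ∃ y, ∀ z, φ y ≤ φ z := by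
  obtain ⟨R, hR⟩ := hc (φ x).toReal
  set K := Metric.closedBall (0 : EuclideanSpace ℝ (Fin d)) (max R ‖x‖)
  have hxK : x ∈ K := by simp [K]
  obtain ⟨y, -, hy⟩ := LowerSemicontinuousOn.exists_isMinOn ⟨x, hxK⟩
    (isCompact_closedBall _ _) (hφ.lowerSemicontinuousOn K)
  refine ⟨y, fun z => ?_⟩
  by_cases hzK : z ∈ K
  · exact hy hzK
  · have hRz : R ≤ ‖z‖ := by
      simp only [K, Metric.mem_closedBall, dist_zero_right, not_le] at hzK
      exact (le_max_left _ _).trans hzK.le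
    exact (hy hxK).trans ((EReal.le_coe_toReal hx).trans (hR z hRz))

theorem EssentiallySmooth.mem_interior_of_bounded_gradient (hφ : EssentiallySmooth φ)
    (hconv : Convex ℝ (edom φ)) (hy : y ∈ edom φ) (hx : x ∈ interior (edom φ)) {K : ℝ}
    (hK : ∀ τ ∈ Ioc (0 : ℝ) 1, ‖gradient (fin φ) (y + τ • (x - y))‖ ≤ K) :
    y ∈ interior (edom φ) := by
  by_contra hy_int
  set τ : ℕ → ℝ := fun k => 1 / ((k : ℝ) + 1)
  have hτ : ∀ k, τ k ∈ Ioc (0 : ℝ) 1 := fun k =>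
    ⟨Nat.one_div_pos_of_nat, div_le_one_of_le₀ (by simp) (by positivity)⟩
  have hseq : Tendsto (fun k => y + τ k • (x - y)) atTop (𝓝 y) := by
    have hτ0 : Tendsto τ atTop (𝓝 0) := tendsto_one_div_add_atTop_nhds_zero_nat
    simpa using tendsto_const_nhds.add (hτ0.smul_const (x - y))
  have hblow := hφ.2.2 _ y (fun k => hconv.add_smul_sub_mem_interior hy hx (hτ k)) hseq
    ⟨subset_closure hy, hy_int⟩
  obtain ⟨k, hk⟩ := (hblow.eventually_gt_atTop K).exists
  exact (hK _ (hτ k)).not_gt hk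

theorem minimizer_mem_interior_edom (hφ_bot : ∀ x, φ x ≠ ⊥) (hφ_conv : IsConvexFn φ)
    (hφ_smooth : EssentiallySmooth φ) (hϕ_bot : ∀ x, ϕ x ≠ ⊥) (hϕ_conv : IsConvexFn ϕ)
    (hx : x ∈ interior (edom φ) ∩ edom ϕ) (hmin : ∀ z, φ y + ϕ y ≤ φ z + ϕ z)
    (hy : y ∈ edom φ ∩ edom ϕ) : y ∈ interior (edom φ) := by
  have hf := hφ_conv.convexOn_fin hφ_bot
  obtain ⟨r, hr, hball⟩ : ∃ r > 0, Metric.closedBall x r ⊆ interior (edom φ) :=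
    Metric.nhds_basis_closedBall.mem_iff.mp (isOpen_interior.mem_nhds hx.1)
  obtain ⟨M, hM⟩ : BddAbove (fin φ '' Metric.closedBall x r) :=
    (isCompact_closedBall x r).bddAbove_image fun z hz =>
      (hφ_smooth.2.1 z (hball hz)).continuousAt.continuousWithinAt
  refine hφ_smooth.mem_interior_of_bounded_gradient hf.1 hy.1 hx.1
    (K := (M - fin φ y + (fin ϕ x - fin ϕ y)) / r) fun τ hτ => ?_
  rw [le_div_iff₀ hr, mul_comm]
  exact hf.mul_norm_gradient_le_of_isMinOn_add (hϕ_conv.convexOn_fin hϕ_bot)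
    (isMinOn_fin_add hφ_bot hϕ_bot hmin hy) hy hx.2 hr.le (hball.trans interior_subset)
    (fun z hz => hM (mem_image_of_mem _ hz))
    hτ (hφ_smooth.2.1 _ (hf.1.add_smul_sub_mem_interior hy.1 hx.1 hτ))

theorem LegendreType.strictConvexOn_fin_add (hφ : LegendreType φ) (hφ_bot : ∀ x, φ x ≠ ⊥)
    (hφ_conv : IsConvexFn φ) (hϕ_bot : ∀ x, ϕ x ≠ ⊥) (hϕ_conv : IsConvexFn ϕ) :
    StrictConvexOn ℝ (interior (edom φ) ∩ edom ϕ) (fin φ + fin ϕ) := by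
  have hϕ := hϕ_conv.convexOn_fin hϕ_bot
  have hS : Convex ℝ (interior (edom φ) ∩ edom ϕ) :=
    (hφ_conv.convexOn_fin hφ_bot).1.interior.inter hϕ.1
  exact (hφ.2.subset inter_subset_left hS).add_convexOn (hϕ.subset inter_subset_right hS)

end ExtendedValued

/-- Existence, uniqueness and location of the minimizer of the sum of a closed
Legendre-type function `φ` and a proper closed convex function `ϕ` whose domain
meets the interior of the domain of `φ`, when one of the two is coercive and the
other is bounded below. -/
theorem legendre_sum_unique_minimizer
    (φ ϕ : EuclideanSpace ℝ (Fin d) → EReal)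
    (hφ_prop : IsProperFn φ) (hφ_closed : IsClosedFn φ) (hφ_conv : IsConvexFn φ)
    (hφ_leg : LegendreType φ)
    (hϕ_prop : IsProperFn ϕ) (hϕ_closed : IsClosedFn ϕ) (hϕ_conv : IsConvexFn ϕ)
    (hdom : (interior (edom φ) ∩ edom ϕ).Nonempty)
    (hcb : (CoerciveFn φ ∧ BddBelowFn ϕ) ∨ (CoerciveFn ϕ ∧ BddBelowFn φ)) :
    ∃ y : EuclideanSpace ℝ (Fin d),
      (∀ z, φ y + ϕ y ≤ φ z + ϕ z) ∧
      y ∈ interior (edom φ) ∩ edom ϕ ∧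
      (∀ z, (∀ w, φ z + ϕ z ≤ φ w + ϕ w) → z = y) := by
  obtain ⟨x, hx⟩ := hdom
  have hx_fin : φ x + ϕ x ≠ ⊤ := EReal.add_ne_top (interior_subset hx.1) hx.2
  have hcoercive : CoerciveFn (φ + ϕ) :=
    hcb.elim (fun h => h.1.add_bddBelowFn h.2) (fun h => h.2.add_coerciveFn h.1)
  obtain ⟨y, hy⟩ := hcoercive.exists_forall_le
    (hφ_closed.add_of_ne_bot hϕ_closed hφ_prop.1 hϕ_prop.1) hx_fin
  have hdom_of_min {z} (hz : ∀ w, φ z + ϕ z ≤ φ w + ϕ w) : z ∈ edom φ ∩ edom ϕ :=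
    mem_edom_inter_of_add_ne_top (hφ_prop.1 z) (hϕ_prop.1 z) (ne_top_of_le_ne_top hx_fin (hz x))
  have hint_of_min {z} (hz : ∀ w, φ z + ϕ z ≤ φ w + ϕ w) : z ∈ interior (edom φ) ∩ edom ϕ :=
    ⟨minimizer_mem_interior_edom hφ_prop.1 hφ_conv hφ_leg.1 hϕ_prop.1 hϕ_conv hx hz
      (hdom_of_min hz), (hdom_of_min hz).2⟩
  have hisMinOn_of_min {z} (hz : ∀ w, φ z + ϕ z ≤ φ w + ϕ w) :
      IsMinOn (fin φ + fin ϕ) (interior (edom φ) ∩ edom ϕ) z :=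
    (isMinOn_fin_add hφ_prop.1 hϕ_prop.1 hz (hdom_of_min hz)).on_subset
      (inter_subset_inter_left _ interior_subset)
  refine ⟨y, hy, hint_of_min hy, fun z hz => ?_⟩
  exact (hφ_leg.strictConvexOn_fin_add hφ_prop.1 hφ_conv hϕ_prop.1 hϕ_conv).eq_of_isMinOn
    (hisMinOn_of_min hz) (hisMinOn_of_min hy) (hint_of_min hz) (hint_of_min hy)
end

section
/- Let μ ∈ ℝ and b > 0, and define ψ(θ) = μθ − log(1 − b²θ²) for |θ| < 1/b and ψ(θ) = +∞ otherwise (the cumulant generating function of the Laplace distribution with location μ and scale b). Then ψ*(μ) = 0, and for y ≠ μ, setting ρ = (y−μ)/b, one has ψ*(y) = √(1+ρ²) − 1 + log((2/ρ²)(√(1+ρ²) − 1)). -/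
/-!
Writing `c = y - μ`, the conjugate is the supremum over `|θ| < 1/b` of the strictly concave
function `f θ = c θ + log (1 - b²θ²)`. Its unique critical point is `s = (√(1+ρ²) - 1)/c`,
where `1 - b²s² = (2/ρ²)(√(1+ρ²) - 1)` and `c s = √(1+ρ²) - 1`, which gives the value; for
`y = μ` the critical point is `s = 0` with value `0`.
-/

/-- The cumulant generating function of the Laplace distribution with
location `μ` and scale `b`. -/
noncomputable def laplaceCGF (μ b : ℝ) : ℝ → EReal := fun θ =>
  if |θ| < 1 / b then ((μ * θ - Real.log (1 - b ^ 2 * θ ^ 2) : ℝ) : EReal) else ⊤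

lemma abs_lt_one_div_iff_sq_mul_sq_lt_one {b : ℝ} (hb : 0 < b) (t : ℝ) :
    |t| < 1 / b ↔ b ^ 2 * t ^ 2 < 1 := by
  rw [lt_div_iff₀ hb, ← mul_pow, sq_lt_one_iff_abs_lt_one, abs_mul, abs_of_pos hb, mul_comm]

/-- A critical point `s` of `θ ↦ c θ + log (1 - b²θ²)` is a global maximum on `b²θ² < 1`. -/
lemma mul_add_log_one_sub_sq_le_of_critical {b c s : ℝ} (hs : b ^ 2 * s ^ 2 < 1)
    (hcrit : c * (1 - b ^ 2 * s ^ 2) = 2 * b ^ 2 * s) {t : ℝ} (ht : b ^ 2 * t ^ 2 < 1) :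
    c * t + Real.log (1 - b ^ 2 * t ^ 2) ≤ c * s + Real.log (1 - b ^ 2 * s ^ 2) := by
  have hu : 0 < 1 - b ^ 2 * t ^ 2 := by linarith
  have hv : 0 < 1 - b ^ 2 * s ^ 2 := by linarith
  -- `log u - log v ≤ u / v - 1`, and with `hcrit` the linear part cancels to `-b²(t-s)²/v`.
  have hlog : Real.log (1 - b ^ 2 * t ^ 2) - Real.log (1 - b ^ 2 * s ^ 2)
      ≤ (1 - b ^ 2 * t ^ 2) / (1 - b ^ 2 * s ^ 2) - 1 := by
    rw [← Real.log_div hu.ne' hv.ne']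
    exact Real.log_le_sub_one_of_pos (div_pos hu hv)
  have hgap : c * (t - s) + ((1 - b ^ 2 * t ^ 2) / (1 - b ^ 2 * s ^ 2) - 1)
      = -(b ^ 2 * (t - s) ^ 2) / (1 - b ^ 2 * s ^ 2) := by
    rw [div_sub_one hv.ne', eq_div_iff hv.ne', add_mul, div_mul_cancel₀ _ hv.ne']
    linear_combination (t - s) * hcrit
  have hnonpos : -(b ^ 2 * (t - s) ^ 2) / (1 - b ^ 2 * s ^ 2) ≤ 0 :=
    div_nonpos_of_nonpos_of_nonneg (neg_nonpos.mpr (by positivity)) hv.le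
  linarith

lemma iSup_mul_sub_laplaceCGF_eq_of_critical {μ b y s : ℝ} (hb : 0 < b)
    (hs : b ^ 2 * s ^ 2 < 1) (hcrit : (y - μ) * (1 - b ^ 2 * s ^ 2) = 2 * b ^ 2 * s) :
    (⨆ θ : ℝ, (((y * θ : ℝ) : EReal) - laplaceCGF μ b θ))
      = (((y - μ) * s + Real.log (1 - b ^ 2 * s ^ 2) : ℝ) : EReal) := by
  apply le_antisymm
  · refine iSup_le fun θ => ?_
    unfold laplaceCGF
    split_ifs with hθ
    · rw [← EReal.coe_sub, EReal.coe_le_coe_iff]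
      have := mul_add_log_one_sub_sq_le_of_critical hs hcrit
        ((abs_lt_one_div_iff_sq_mul_sq_lt_one hb θ).mp hθ)
      linarith
    · simp [EReal.sub_top]
  · refine le_iSup_of_le s ?_
    unfold laplaceCGF
    rw [if_pos ((abs_lt_one_div_iff_sq_mul_sq_lt_one hb s).mpr hs), ← EReal.coe_sub,
      EReal.coe_le_coe_iff]
    linarith

section CriticalPoint

variable {b c : ℝ}

lemma one_lt_sqrt_one_add_sq_div (hb : b ≠ 0) (hc : c ≠ 0) :
    1 < Real.sqrt (1 + (c / b) ^ 2) := by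
  rw [Real.lt_sqrt zero_le_one, one_pow, lt_add_iff_pos_right]
  exact sq_pos_of_ne_zero (div_ne_zero hc hb)

lemma one_sub_sq_mul_sq_div_eq {S : ℝ} (hb : b ≠ 0) (hc : c ≠ 0)
    (hS : S ^ 2 = 1 + (c / b) ^ 2) :
    1 - b ^ 2 * ((S - 1) / c) ^ 2 = 2 / (c / b) ^ 2 * (S - 1) := by
  field_simp
  field_simp at hS
  linear_combination -hS

end CriticalPoint

/-- The convex conjugate of the Laplace cumulant generating function vanishes at
`μ`, and for `y ≠ μ`, with `ρ = (y−μ)/b`, equals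
`√(1+ρ²) − 1 + log((2/ρ²)(√(1+ρ²) − 1))`. -/
theorem cramer_laplace (μ b : ℝ) (hb : 0 < b) :
    ((⨆ θ : ℝ, (((μ * θ : ℝ) : EReal) - laplaceCGF μ b θ)) = (0 : EReal)) ∧
    (∀ y : ℝ, y ≠ μ →
      (⨆ θ : ℝ, (((y * θ : ℝ) : EReal) - laplaceCGF μ b θ))
        = ((Real.sqrt (1 + ((y - μ) / b) ^ 2) - 1 +
            Real.log ((2 / ((y - μ) / b) ^ 2) *
              (Real.sqrt (1 + ((y - μ) / b) ^ 2) - 1)) : ℝ) : EReal)) := by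
  refine ⟨?_, fun y hy => ?_⟩
  · simpa using iSup_mul_sub_laplaceCGF_eq_of_critical (μ := μ) (y := μ) (s := 0) hb
      (by simp) (by simp)
  · have hc : y - μ ≠ 0 := sub_ne_zero.mpr hy
    have hS1 := one_lt_sqrt_one_add_sq_div hb.ne' hc
    have hval := one_sub_sq_mul_sq_div_eq hb.ne' hc (Real.sq_sqrt (by positivity))
    set S := Real.sqrt (1 + ((y - μ) / b) ^ 2)
    clear_value S
    have hpos : 0 < 2 / ((y - μ) / b) ^ 2 * (S - 1) :=
      mul_pos (by positivity) (sub_pos.mpr hS1)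
    rw [iSup_mul_sub_laplaceCGF_eq_of_critical (s := (S - 1) / (y - μ)) hb (by linarith)
      (by rw [hval]; field_simp), hval, mul_div_cancel₀ _ hc]
end

section
/- For t, α > 0 and β ∈ ℝ, the proximal operator of the function g(y) = t(βy − α + α log(α/(βy))) for y > 0 (and +∞ for y ≤ 0) is given by prox_g(x̄) = (x̄ − tβ + √((x̄ − tβ)² + 4tα))/2, which is a positive real number for every x̄ ∈ ℝ. -/
/-- `t` times the Cramér rate function of the Gamma(α, β) distribution. -/
noncomputable def gammaReg (t α β : ℝ) : ℝ → EReal := fun y =>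
  if 0 < y then ((t * (β * y - α + α * Real.log (α / (β * y))) : ℝ) : EReal) else ⊤

/-- Key real inequality: if `p` satisfies the stationarity identity, then the
objective at `y` exceeds that at `p` by at least `(y-p)²/2`. -/
lemma prox_gamma_key (t α β xbar p y : ℝ) (ht : 0 < t) (hα : 0 < α) (hβ : 0 < β)
    (hp : 0 < p) (hy : 0 < y) (hid : t * α = p * p - (xbar - t * β) * p) :
    t * (β * p - α + α * Real.log (α / (β * p))) + (1 / 2) * (p - xbar) ^ 2
      + (y - p) ^ 2 / 2
      ≤ t * (β * y - α + α * Real.log (α / (β * y))) + (1 / 2) * (y - xbar) ^ 2 := by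
  have hlogp : Real.log (α / (β * p)) = Real.log α - (Real.log β + Real.log p) := by
    rw [Real.log_div (ne_of_gt hα) (by positivity), Real.log_mul (ne_of_gt hβ) (ne_of_gt hp)]
  have hlogy : Real.log (α / (β * y)) = Real.log α - (Real.log β + Real.log y) := by
    rw [Real.log_div (ne_of_gt hα) (by positivity), Real.log_mul (ne_of_gt hβ) (ne_of_gt hy)]
  have hlog : Real.log y - Real.log p ≤ y / p - 1 := by
    have := Real.log_le_sub_one_of_pos (show (0:ℝ) < y / p by positivity)
    rwa [Real.log_div (ne_of_gt hy) (ne_of_gt hp)] at this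
  have h1 : p * (Real.log y - Real.log p) ≤ y - p := by
    have := mul_le_mul_of_nonneg_left hlog (le_of_lt hp)
    calc p * (Real.log y - Real.log p) ≤ p * (y / p - 1) := this
      _ = y - p := by field_simp
  have hps : 0 < p - (xbar - t * β) := by
    have htα : 0 < t * α := mul_pos ht hα
    nlinarith
  rw [hlogp, hlogy]
  nlinarith [mul_le_mul_of_nonneg_left h1 (le_of_lt hps)]

/-- The proximal operator of `t` times the Gamma Cramér rate function is
`prox_g(x̄) = (x̄ − tβ + √((x̄ − tβ)² + 4tα))/2`, a positive real, for every
`x̄ ∈ ℝ` (stated as: this point is positive and is the unique minimizer of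
`g(y) + (1/2)(y − x̄)²`). -/
theorem prox_gamma_cramer (t α β xbar : ℝ) (ht : 0 < t) (hα : 0 < α) (hβ : 0 < β) :
    0 < (xbar - t * β + Real.sqrt ((xbar - t * β) ^ 2 + 4 * t * α)) / 2 ∧
    (∀ y : ℝ,
      gammaReg t α β ((xbar - t * β + Real.sqrt ((xbar - t * β) ^ 2 + 4 * t * α)) / 2) +
          (((1 / 2) * (((xbar - t * β + Real.sqrt ((xbar - t * β) ^ 2 + 4 * t * α)) / 2) - xbar) ^ 2 : ℝ) : EReal) ≤
        gammaReg t α β y + (((1 / 2) * (y - xbar) ^ 2 : ℝ) : EReal)) ∧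
    (∀ p : ℝ,
      (∀ y : ℝ, gammaReg t α β p + (((1 / 2) * (p - xbar) ^ 2 : ℝ) : EReal) ≤
          gammaReg t α β y + (((1 / 2) * (y - xbar) ^ 2 : ℝ) : EReal)) →
        p = (xbar - t * β + Real.sqrt ((xbar - t * β) ^ 2 + 4 * t * α)) / 2) := by
  set s := xbar - t * β with hs
  set r := Real.sqrt (s ^ 2 + 4 * t * α) with hr
  set P := (s + r) / 2 with hP
  have hD : (0:ℝ) ≤ s ^ 2 + 4 * t * α := by nlinarith
  have hr2 : r ^ 2 = s ^ 2 + 4 * t * α := Real.sq_sqrt hD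
  have hrabs : |s| < r := by
    have : Real.sqrt (s ^ 2) < r := by
      apply Real.sqrt_lt_sqrt (sq_nonneg s); nlinarith
    rwa [Real.sqrt_sq_eq_abs] at this
  have hPpos : 0 < P := by
    have := neg_abs_le s
    have := hrabs
    rw [hP]; cases abs_cases s with
    | inl h => nlinarith [abs_nonneg s]
    | inr h => nlinarith
  have hid : t * α = P * P - s * P := by
    rw [hP]; linear_combination (-(1:ℝ)/4) * hr2
  have hgP : gammaReg t α β P
      = ((t * (β * P - α + α * Real.log (α / (β * P))) : ℝ) : EReal) := by
    simp [gammaReg, hPpos]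
  refine ⟨hPpos, ?_, ?_⟩
  · intro y
    by_cases hy : 0 < y
    · have hgy : gammaReg t α β y
          = ((t * (β * y - α + α * Real.log (α / (β * y))) : ℝ) : EReal) := by
        simp [gammaReg, hy]
      rw [hgP, hgy, ← EReal.coe_add, ← EReal.coe_add, EReal.coe_le_coe_iff]
      have := prox_gamma_key t α β xbar P y ht hα hβ hPpos hy hid
      nlinarith [sq_nonneg (y - P)]
    · have hgy : gammaReg t α β y = ⊤ := by simp [gammaReg, hy]
      rw [hgy, hgP, ← EReal.coe_add, EReal.top_add_coe]
      exact le_top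
  · intro p hmin
    by_cases hp : 0 < p
    · have := hmin P
      rw [hgP] at this
      have hgp : gammaReg t α β p
          = ((t * (β * p - α + α * Real.log (α / (β * p))) : ℝ) : EReal) := by
        simp [gammaReg, hp]
      rw [hgp, ← EReal.coe_add, ← EReal.coe_add, EReal.coe_le_coe_iff] at this
      have hk := prox_gamma_key t α β xbar P p ht hα hβ hPpos hp hid
      nlinarith [sq_nonneg (p - P)]
    · exfalso
      have := hmin P
      rw [hgP, ← EReal.coe_add] at this
      have hgp : gammaReg t α β p = ⊤ := by simp [gammaReg, hp]
      rw [hgp, EReal.top_add_coe, top_le_iff] at this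
      exact EReal.coe_ne_top _ this
end
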